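/- arXiv:1712.09967 — 2 statements merged into one kernel-verified Lean document; each statement's English description precedes it below -/
import Mathlib

section
/- Let f : ℂ^n → ℂ be a polynomial of degree at most r, let v = a + i·b with a, b ∈ ℝ^n, and suppose |f(v)| ≥ ε·M for some ε, M > 0. Define v_k = a + k·b ∈ ℝ^n for k = 0, 1, …, r. Then there exists k ∈ {0,…,r} with |f(v_k)| ≥ (ε/(r+2)!)·M. -/
open MvPolynomial

private lemma basis_eval_bound (r k : ℕ) (hk : k ∈ Finset.range (r + 1)) :
    ‖Polynomial.eval Complex.I
      (Lagrange.basis (Finset.range (r + 1)) (fun j : ℕ => (j : ℂ)) k)‖ ≤ (r + 1).factorial := by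
  unfold Lagrange.basis
  rw [Polynomial.eval_prod, norm_prod]
  calc (∏ j ∈ (Finset.range (r+1)).erase k,
        ‖Polynomial.eval Complex.I (Lagrange.basisDivisor (k : ℂ) (j : ℂ))‖)
      ≤ ∏ j ∈ (Finset.range (r+1)).erase k, ((j : ℝ) + 1) := by
        apply Finset.prod_le_prod (fun _ _ => norm_nonneg _)
        intro j hj
        have hjk : j ≠ k := (Finset.mem_erase.mp hj).1
        rw [Lagrange.basisDivisor]
        simp only [Polynomial.eval_mul, Polynomial.eval_C, Polynomial.eval_sub, Polynomial.eval_X,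
          norm_mul]
        have h1 : ‖((k : ℂ) - j)⁻¹‖ ≤ 1 := by
          rw [norm_inv]
          have hne : ((k : ℤ) - j) ≠ 0 := by
            intro h
            exact hjk (by omega : j = k)
          have : (1 : ℝ) ≤ ‖(k : ℂ) - j‖ := by
            have : ((k : ℂ) - j) = (((k : ℤ) - j : ℤ) : ℂ) := by push_cast; ring
            rw [this, Complex.norm_intCast]
            exact_mod_cast Int.one_le_abs hne
          exact inv_le_one_of_one_le₀ this
        have h2 : ‖Complex.I - (j : ℂ)‖ ≤ (j : ℝ) + 1 := by
          calc ‖Complex.I - (j : ℂ)‖ ≤ ‖Complex.I‖ + ‖(j : ℂ)‖ := norm_sub_le _ _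
            _ = 1 + j := by rw [Complex.norm_I, Complex.norm_natCast]
            _ = (j : ℝ) + 1 := by ring
        calc ‖((k:ℂ) - j)⁻¹‖ * ‖Complex.I - j‖
            ≤ 1 * ((j : ℝ) + 1) := by
              apply mul_le_mul h1 h2 (norm_nonneg _) zero_le_one
          _ = (j : ℝ) + 1 := one_mul _
    _ ≤ ∏ j ∈ Finset.range (r+1), ((j : ℝ) + 1) := by
        have hnn : (0:ℝ) ≤ ∏ j ∈ (Finset.range (r+1)).erase k, ((j : ℝ) + 1) :=
          Finset.prod_nonneg fun j _ => by positivity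
        have hsplit := Finset.mul_prod_erase (Finset.range (r+1))
          (fun j => ((j : ℝ) + 1)) hk
        have h1k : (1:ℝ) ≤ (k : ℝ) + 1 := le_add_of_nonneg_left (Nat.cast_nonneg k)
        calc ∏ j ∈ (Finset.range (r+1)).erase k, ((j : ℝ) + 1)
            ≤ ((k : ℝ) + 1) * ∏ j ∈ (Finset.range (r+1)).erase k, ((j : ℝ) + 1) :=
              le_mul_of_one_le_left hnn h1k
          _ = ∏ j ∈ Finset.range (r+1), ((j : ℝ) + 1) := by simpa using hsplit
    _ = (r + 1).factorial := by
        have : ((∏ x ∈ Finset.range (r+1), (x + 1) : ℕ) : ℝ)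
            = ∏ x ∈ Finset.range (r+1), ((x : ℝ) + 1) := by push_cast; rfl
        rw [← this, Finset.prod_range_add_one_eq_factorial]

/-- if `f` has degree at most `r` and `|f(a + ib)| ≥ ε·M`, then for some
`k ∈ {0,…,r}` the real point `v_k = a + k·b` satisfies `|f(v_k)| ≥ (ε/(r+2)!)·M`. -/
theorem real_point_from_complex (n r : ℕ) (f : MvPolynomial (Fin n) ℂ)
    (hdeg : f.totalDegree ≤ r) (a b : Fin n → ℝ) (ε M : ℝ) (hε : 0 < ε) (hM : 0 < M)
    (hv : ε * M ≤ ‖eval (fun i => (a i : ℂ) + Complex.I * (b i : ℂ)) f‖) :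
    ∃ k : ℕ, k ≤ r ∧
      ε / ((r + 2).factorial : ℝ) * M ≤
        ‖eval (fun i => ((a i + (k : ℝ) * b i : ℝ) : ℂ)) f‖ := by
  set g : Fin n → Polynomial ℂ := fun i =>
    Polynomial.C (a i : ℂ) + Polynomial.C (b i : ℂ) * Polynomial.X with hg
  set F : Polynomial ℂ := eval₂ Polynomial.C g f with hF
  -- evaluation
  have hFeval : ∀ z : ℂ, Polynomial.eval z F =
      eval (fun i => (a i : ℂ) + (b i : ℂ) * z) f := by
    intro z
    have := eval₂_comp_left (Polynomial.evalRingHom z) Polynomial.C g f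
    simp only [Polynomial.coe_evalRingHom] at this
    rw [hF, this]
    have hc : (Polynomial.evalRingHom z).comp (Polynomial.C : ℂ →+* Polynomial ℂ)
        = RingHom.id ℂ := by
      ext c; simp
    rw [hc]
    have hfun : (Polynomial.eval z ∘ g) = fun i => (a i : ℂ) + (b i : ℂ) * z := by
      funext i; simp [hg]
    rw [hfun, MvPolynomial.eval₂_id]
  -- degree bound
  have hFdeg : F.natDegree ≤ r := by
    rw [hF, eval₂_eq]
    refine (Polynomial.natDegree_sum_le _ _).trans ?_
    rw [Finset.fold_max_le]
    constructor
    · exact Nat.zero_le _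
    intro d hd
    refine (Polynomial.natDegree_mul_le).trans ?_
    rw [Polynomial.natDegree_C, zero_add]
    refine (Polynomial.natDegree_prod_le _ _).trans ?_
    calc ∑ i ∈ d.support, ((g i) ^ d i).natDegree
        ≤ ∑ i ∈ d.support, d i := by
          apply Finset.sum_le_sum
          intro i _
          refine (Polynomial.natDegree_pow_le).trans ?_
          have : (g i).natDegree ≤ 1 := by
            refine (Polynomial.natDegree_add_le _ _).trans ?_
            simp only [Polynomial.natDegree_C, max_le_iff]
            refine ⟨Nat.zero_le _, ?_⟩
            exact (Polynomial.natDegree_C_mul_le _ _).trans Polynomial.natDegree_X_le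
          calc d i * (g i).natDegree ≤ d i * 1 := Nat.mul_le_mul_left _ this
            _ = d i := Nat.mul_one _
      _ ≤ f.totalDegree := MvPolynomial.le_totalDegree hd
      _ ≤ r := hdeg
  -- interpolation
  have hinj : Set.InjOn (fun j : ℕ => (j : ℂ)) (Finset.range (r + 1)) :=
    fun x _ y _ h => Nat.cast_injective h
  have hdlt : F.degree < (((Finset.range (r + 1)).card : ℕ) : WithBot ℕ) := by
    rw [Finset.card_range]
    calc F.degree ≤ (F.natDegree : WithBot ℕ) := Polynomial.degree_le_natDegree
      _ ≤ (r : WithBot ℕ) := by exact_mod_cast hFdeg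
      _ < ((r + 1 : ℕ) : WithBot ℕ) := by exact_mod_cast Nat.lt_succ_self r
  have hinterp := Lagrange.eq_interpolate hinj hdlt
  by_contra hcon
  push_neg at hcon
  set c : ℝ := ε / ((r + 2).factorial : ℝ) * M with hc
  have hclt : ∀ k ∈ Finset.range (r + 1), ‖Polynomial.eval (k : ℂ) F‖ < c := by
    intro k hk
    have hkr : k ≤ r := Nat.lt_succ_iff.mp (Finset.mem_range.mp hk)
    have heq : (fun i => ((a i + (k : ℝ) * b i : ℝ) : ℂ))
        = fun i => (a i : ℂ) + (b i : ℂ) * (k : ℂ) := by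
      funext i; push_cast; ring
    rw [hFeval, ← heq]
    exact hcon k hkr
  have key : ‖Polynomial.eval Complex.I F‖
      < (r + 1) * (c * (r + 1).factorial) := by
    calc ‖Polynomial.eval Complex.I F‖
        = ‖Polynomial.eval Complex.I
            (Lagrange.interpolate (Finset.range (r+1)) (fun j : ℕ => (j : ℂ))
              (fun k => Polynomial.eval (k : ℂ) F))‖ := by rw [← hinterp]
      _ ≤ ∑ k ∈ Finset.range (r+1), ‖Polynomial.eval (k : ℂ) F‖
            * ‖Polynomial.eval Complex.I
                (Lagrange.basis (Finset.range (r+1)) (fun j : ℕ => (j : ℂ)) k)‖ := by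
          rw [Lagrange.interpolate_apply, Polynomial.eval_finset_sum]
          refine (norm_sum_le _ _).trans ?_
          apply Finset.sum_le_sum
          intro k _
          rw [Polynomial.eval_mul, Polynomial.eval_C, norm_mul]
      _ < ∑ _k ∈ Finset.range (r+1), c * (r + 1).factorial := by
          apply Finset.sum_lt_sum_of_nonempty ⟨0, Finset.mem_range.mpr (Nat.succ_pos r)⟩
          intro k hk
          have hb := basis_eval_bound r k hk
          have hcpos : 0 < c := by positivity
          calc ‖Polynomial.eval (k : ℂ) F‖
                * ‖Polynomial.eval Complex.I _‖
              ≤ ‖Polynomial.eval (k : ℂ) F‖ * (r + 1).factorial :=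
                mul_le_mul_of_nonneg_left hb (norm_nonneg _)
            _ < c * (r + 1).factorial := by
                apply mul_lt_mul_of_pos_right (hclt k hk)
                exact_mod_cast Nat.factorial_pos _
      _ = (r + 1) * (c * (r + 1).factorial) := by
          rw [Finset.sum_const, Finset.card_range, nsmul_eq_mul]; push_cast; ring
  have hvI : ε * M ≤ ‖Polynomial.eval Complex.I F‖ := by
    have heq : (fun i => (a i : ℂ) + Complex.I * (b i : ℂ))
        = fun i => (a i : ℂ) + (b i : ℂ) * Complex.I := by
      funext i; ring
    rw [hFeval, ← heq]
    exact hv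
  have hfac : ((r : ℝ) + 1) * (r + 1).factorial ≤ (r + 2).factorial := by
    have : (r + 2).factorial = (r + 2) * (r + 1).factorial := Nat.factorial_succ (r + 1)
    rw [this]
    push_cast
    have : (0 : ℝ) ≤ (r + 1).factorial := by positivity
    nlinarith
  have hfp : (0 : ℝ) < (r + 2).factorial := by exact_mod_cast Nat.factorial_pos _
  have : (r + 1 : ℝ) * (c * (r + 1).factorial) ≤ ε * M := by
    have heq : (r + 1 : ℝ) * (c * (r + 1).factorial)
        = ε * M * (((r : ℝ) + 1) * (r + 1).factorial) / (r + 2).factorial := by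
      rw [hc]; ring
    rw [heq, div_le_iff₀ hfp]
    exact mul_le_mul_of_nonneg_left hfac (by positivity)
  linarith
end

section
/- Let H ⊆ ℂ^n be an ε-robust hitting set for a class V of n-variate complex polynomials of degree at most r, meaning for every f ∈ V there is v ∈ H with |f(v)| ≥ ε·‖f‖₂. Write each v ∈ H as v = a + i·b with a, b ∈ ℝ^n and define H_ℝ = {a + k·b : v = a + ib ∈ H, k ∈ {0,…,r}}. Then H_ℝ ⊆ ℝ^n is an (ε/(r+2)!)-robust hitting set for V. -/
open MvPolynomial

lemma aux_natDegree_le {n : ℕ} (g : Fin n → Polynomial ℂ) (hg : ∀ i, (g i).natDegree ≤ 1)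
    (f : MvPolynomial (Fin n) ℂ) :
    (MvPolynomial.eval₂ Polynomial.C g f).natDegree ≤ f.totalDegree := by
  rw [MvPolynomial.eval₂_eq]
  refine (Polynomial.natDegree_sum_le _ _).trans ?_
  rw [Finset.fold_max_le]
  refine ⟨Nat.zero_le _, fun d hd => ?_⟩
  calc (Polynomial.C (MvPolynomial.coeff d f) *
        ∏ i ∈ d.support, g i ^ d i).natDegree
      ≤ (Polynomial.C (MvPolynomial.coeff d f)).natDegree +
        (∏ i ∈ d.support, g i ^ d i).natDegree := Polynomial.natDegree_mul_le
    _ ≤ 0 + ∑ i ∈ d.support, (g i ^ d i).natDegree := by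
        gcongr
        · exact le_of_eq (Polynomial.natDegree_C _)
        · exact Polynomial.natDegree_prod_le _ _
    _ ≤ ∑ i ∈ d.support, d i * 1 := by
        rw [zero_add]
        refine Finset.sum_le_sum fun i _ => ?_
        exact (Polynomial.natDegree_pow_le).trans (by gcongr; exact hg i)
    _ = ∑ i ∈ d.support, d i := by simp
    _ ≤ f.totalDegree := MvPolynomial.le_totalDegree hd

lemma aux_eval_eval₂ {n : ℕ} (g : Fin n → Polynomial ℂ) (f : MvPolynomial (Fin n) ℂ) (z : ℂ) :
    Polynomial.eval z (MvPolynomial.eval₂ Polynomial.C g f) =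
      MvPolynomial.eval (fun i => Polynomial.eval z (g i)) f := by
  rw [show Polynomial.eval z (MvPolynomial.eval₂ Polynomial.C g f)
      = (Polynomial.evalRingHom z) (MvPolynomial.eval₂ Polynomial.C g f) from rfl,
    MvPolynomial.eval₂_comp_left (Polynomial.evalRingHom z) Polynomial.C g f]
  have : (Polynomial.evalRingHom z).comp Polynomial.C = RingHom.id ℂ := by
    ext a; simp
  rw [this]
  rfl

lemma aux_key (r : ℕ) (F : Polynomial ℂ) (hF : F.natDegree ≤ r) :
    ∃ k ≤ r, ‖F.eval Complex.I‖ ≤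
      ((r + 2).factorial : ℝ) * ‖F.eval (k : ℂ)‖ := by
  set s : Finset ℕ := Finset.range (r + 1) with hs
  have hinj : Set.InjOn (fun k : ℕ => (k : ℂ)) s :=
    fun a _ b _ h => Nat.cast_injective h
  have hdlt : F.degree < (s.card : WithBot ℕ) := by
    rw [hs, Finset.card_range]
    exact lt_of_le_of_lt F.degree_le_natDegree (by exact_mod_cast Nat.lt_succ_of_le hF)
  have hinterp := Lagrange.eq_interpolate hinj hdlt
  -- bound on basis polynomials at I
  have hbasis : ∀ k ∈ s, ‖Polynomial.eval Complex.I
      (Lagrange.basis s (fun k : ℕ => (k : ℂ)) k)‖ ≤ ((r + 1).factorial : ℝ) := by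
    intro k hk
    unfold Lagrange.basis
    rw [Polynomial.eval_prod]
    rw [norm_prod]
    calc ∏ j ∈ s.erase k, ‖Polynomial.eval Complex.I
          (Lagrange.basisDivisor (k : ℂ) (j : ℂ))‖
        ≤ ∏ j ∈ s.erase k, ((1 : ℝ) + j) := by
          refine Finset.prod_le_prod (fun j _ => norm_nonneg _) fun j hj => ?_
          obtain ⟨hjk, hjs⟩ := Finset.mem_erase.mp hj
          rw [Lagrange.basisDivisor]
          simp only [Polynomial.eval_mul, Polynomial.eval_C, Polynomial.eval_sub,
            Polynomial.eval_X, norm_mul, norm_inv]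
          have h1 : (1 : ℝ) ≤ ‖(k : ℂ) - (j : ℂ)‖ := by
            have : ((k : ℂ) - (j : ℂ)) = ((k - j : ℤ) : ℂ) := by push_cast; ring
            rw [this]
            rw [Complex.norm_intCast]
            have : (k : ℤ) - j ≠ 0 := by
              intro h; apply hjk; omega
            have : (1 : ℤ) ≤ |(k : ℤ) - j| := Int.one_le_abs this
            exact_mod_cast this
          have h2 : ‖Complex.I - (j : ℂ)‖ ≤ 1 + j := by
            refine (norm_sub_le _ _).trans ?_
            simp [Complex.norm_natCast]
          calc (‖(k : ℂ) - (j : ℂ)‖)⁻¹ * ‖Complex.I - (j : ℂ)‖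
              ≤ 1 * ((1 : ℝ) + j) := by
                refine mul_le_mul ?_ h2 (norm_nonneg _) zero_le_one
                rw [inv_le_one_iff₀]; right; exact h1
            _ = (1 : ℝ) + j := one_mul _
      _ ≤ ∏ j ∈ s, ((1 : ℝ) + j) := by
          rw [← Finset.mul_prod_erase s _ hk]
          have hnn : (0 : ℝ) ≤ ∏ j ∈ s.erase k, ((1 : ℝ) + j) :=
            Finset.prod_nonneg fun j _ => by positivity
          have h1k : (1 : ℝ) ≤ 1 + k := by have : (0:ℝ) ≤ k := Nat.cast_nonneg _; linarith
          exact le_mul_of_one_le_left hnn h1k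
      _ = ((r + 1).factorial : ℝ) := by
          have h1 : ∏ j ∈ Finset.range (r + 1), ((1 : ℝ) + j)
              = ((∏ j ∈ Finset.range (r + 1), (j + 1) : ℕ) : ℝ) := by
            push_cast
            exact Finset.prod_congr rfl fun j _ => by ring
          rw [hs, h1, Finset.prod_range_add_one_eq_factorial]
  -- pick maximizer
  obtain ⟨k0, hk0s, hk0max⟩ := s.exists_max_image (fun k => ‖F.eval (k : ℂ)‖)
    ⟨0, Finset.mem_range.mpr (Nat.succ_pos r)⟩
  refine ⟨k0, by have := Finset.mem_range.mp hk0s; omega, ?_⟩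
  have : ‖F.eval Complex.I‖ ≤
      ∑ k ∈ s, ‖F.eval (k : ℂ)‖ * ((r + 1).factorial : ℝ) := by
    conv_lhs => rw [hinterp]
    rw [Lagrange.interpolate_apply, Polynomial.eval_finset_sum]
    refine (norm_sum_le _ _).trans ?_
    refine Finset.sum_le_sum fun k hk => ?_
    rw [Polynomial.eval_mul, norm_mul, Polynomial.eval_C]
    exact mul_le_mul_of_nonneg_left (hbasis k hk) (norm_nonneg _)
  calc ‖F.eval Complex.I‖
      ≤ ∑ k ∈ s, ‖F.eval (k : ℂ)‖ * ((r + 1).factorial : ℝ) := this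
    _ ≤ ∑ _k ∈ s, ‖F.eval (k0 : ℂ)‖ * ((r + 1).factorial : ℝ) := by
        refine Finset.sum_le_sum fun k hk => ?_
        exact mul_le_mul_of_nonneg_right (hk0max k hk) (Nat.cast_nonneg _)
    _ = (r + 1) * ((r + 1).factorial : ℝ) * ‖F.eval (k0 : ℂ)‖ := by
        rw [Finset.sum_const, hs, Finset.card_range]
        push_cast; ring
    _ ≤ ((r + 2).factorial : ℝ) * ‖F.eval (k0 : ℂ)‖ := by
        refine mul_le_mul_of_nonneg_right ?_ (norm_nonneg _)
        have : (r + 1) * (r + 1).factorial ≤ (r + 2).factorial := by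
          rw [show r + 2 = (r + 1) + 1 from rfl, Nat.factorial_succ]
          exact Nat.mul_le_mul_right _ (by omega)
        exact_mod_cast this

/-- if `H ⊆ ℂ^n` is an ε-robust hitting set for a class `V` of polynomials of
degree at most `r` (with respect to a fixed norm `Nrm`), then the real set
`H_ℝ = {a + k·b : a + ib ∈ H, 0 ≤ k ≤ r}` is an `(ε/(r+2)!)`-robust hitting set for `V`. -/
theorem robust_hitting_real (n r : ℕ) (V : Set (MvPolynomial (Fin n) ℂ))
    (hdeg : ∀ f ∈ V, f.totalDegree ≤ r) (Nrm : MvPolynomial (Fin n) ℂ → ℝ)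
    (ε : ℝ) (hε : 0 < ε) (H : Finset (Fin n → ℂ))
    (hH : ∀ f ∈ V, ∃ v ∈ H, ε * Nrm f ≤ ‖eval v f‖) :
    ∀ f ∈ V, ∃ v ∈ H, ∃ k : ℕ, k ≤ r ∧
      ε / ((r + 2).factorial : ℝ) * Nrm f ≤
        ‖eval (fun i => (((v i).re + (k : ℝ) * (v i).im : ℝ) : ℂ)) f‖ := by
  intro f hf
  obtain ⟨v, hvH, hval⟩ := hH f hf
  set g : Fin n → Polynomial ℂ := fun i =>
    Polynomial.C ((v i).re : ℂ) + Polynomial.C ((v i).im : ℂ) * Polynomial.X with hg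
  have hgdeg : ∀ i, (g i).natDegree ≤ 1 := by
    intro i
    refine (Polynomial.natDegree_add_le _ _).trans ?_
    simp only [Polynomial.natDegree_C, max_le_iff]
    refine ⟨Nat.zero_le _, ?_⟩
    refine (Polynomial.natDegree_mul_le).trans ?_
    simp [Polynomial.natDegree_X_le]
  set F : Polynomial ℂ := MvPolynomial.eval₂ Polynomial.C g f with hF
  have hFdeg : F.natDegree ≤ r := (aux_natDegree_le g hgdeg f).trans (hdeg f hf)
  obtain ⟨k, hkr, hkey⟩ := aux_key r F hFdeg
  refine ⟨v, hvH, k, hkr, ?_⟩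
  have hFI : F.eval Complex.I = eval v f := by
    rw [hF, aux_eval_eval₂]
    have hpt : (fun i => Polynomial.eval Complex.I (g i)) = v := by
      funext i; simp [hg, Complex.re_add_im]
    rw [hpt]
  have hFk : F.eval (k : ℂ) =
      eval (fun i => (((v i).re + (k : ℝ) * (v i).im : ℝ) : ℂ)) f := by
    rw [hF, aux_eval_eval₂]
    have hpt : (fun i => Polynomial.eval ((k : ℂ)) (g i))
        = fun i => (((v i).re + (k : ℝ) * (v i).im : ℝ) : ℂ) := by
      funext i
      simp only [hg, Polynomial.eval_add, Polynomial.eval_mul, Polynomial.eval_C,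
        Polynomial.eval_X]
      push_cast
      ring
    rw [hpt]
  rw [← hFk]
  have hfac : (0 : ℝ) < ((r + 2).factorial : ℝ) := by
    exact_mod_cast Nat.factorial_pos _
  rw [div_mul_eq_mul_div, div_le_iff₀ hfac]
  calc ε * Nrm f ≤ ‖eval v f‖ := hval
    _ = ‖F.eval Complex.I‖ := by rw [hFI]
    _ ≤ ((r + 2).factorial : ℝ) * ‖F.eval (k : ℂ)‖ := hkey
    _ = ‖F.eval (k : ℂ)‖ * ((r + 2).factorial : ℝ) := mul_comm _ _
end
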